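/- arXiv:2107.01287 — 2 statements merged into one kernel-verified Lean document; each statement's English description precedes it below -/
import Mathlib

section
/- Let p ∈ (0,1). There exists η > 0 such that if K is an origin-symmetric convex body in ℝⁿ of class C^{2,+} with ‖1 − h_K‖_{C²(𝕊^{n−1})} ≤ η, then for every t ∈ [0,1] the function h_t := [(1−t) + t h_K^p]^{1/p} on 𝕊^{n−1} is the support function of an origin-symmetric convex body of class C^{2,+} (equivalently, h_t ∈ C²(𝕊^{n−1}) and Q[h_t] > 0 on 𝕊^{n−1}). -/
open Metric MeasureTheory Filter
open scoped RealInnerProductSpace Pointwise Topology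

noncomputable section

/-- Euclidean `n`-space. -/
abbrev Eucl (n : ℕ) : Type := EuclideanSpace ℝ (Fin n)

/-- The support function of a set `K ⊆ ℝⁿ`. -/
def suppFn {n : ℕ} (K : Set (Eucl n)) (x : Eucl n) : ℝ :=
  sSup ((fun y => ⟪x, y⟫) '' K)

/-- The Wulff shape (Aleksandrov body) of a function `f`. -/
def wulff {n : ℕ} (f : Eucl n → ℝ) : Set (Eucl n) :=
  {x | ∀ y : Eucl n, ‖y‖ = 1 → ⟪x, y⟫ ≤ f y}

/-- The `p`-convex combination `(1-t)·K₀ +_p t·K₁` (for `p > 0`). -/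
def pComb {n : ℕ} (p t : ℝ) (K₀ K₁ : Set (Eucl n)) : Set (Eucl n) :=
  wulff (fun y => ((1 - t) * suppFn K₀ y ^ p + t * suppFn K₁ y ^ p) ^ (1 / p))

/-- The `0`-convex combination `(1-t)·K₀ +₀ t·K₁`. -/
def zeroComb {n : ℕ} (t : ℝ) (K₀ K₁ : Set (Eucl n)) : Set (Eucl n) :=
  wulff (fun y => suppFn K₀ y ^ (1 - t) * suppFn K₁ y ^ t)

/-- The `L_p` convex combination, `p ∈ [0,1)`. -/
def lpComb {n : ℕ} (p t : ℝ) (K₀ K₁ : Set (Eucl n)) : Set (Eucl n) :=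
  if p = 0 then zeroComb t K₀ K₁ else pComb p t K₀ K₁

/-- A convex body: a nonempty compact convex set. -/
def IsConvexBody {n : ℕ} (K : Set (Eucl n)) : Prop :=
  Convex ℝ K ∧ IsCompact K ∧ K.Nonempty

/-- `κ_j`, the volume of the unit ball of `ℝʲ`. -/
def kappa (j : ℕ) : ℝ := (volume (ball (0 : EuclideanSpace ℝ (Fin j)) 1)).toReal

/-- The `k`-th intrinsic volume of `K ⊆ ℝⁿ`: by the Steiner formula, the volume of the
`ε`-neighbourhood of `K` is the polynomial `∑_j κ_{n-j} V_j(K) ε^{n-j}` in `ε`; we recover its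
coefficients by Lagrange interpolation at the `n+1` nodes `ε = 0, 1, …, n`. -/
def intrinsicVolume {n : ℕ} (k : ℕ) (K : Set (Eucl n)) : ℝ :=
  (Lagrange.interpolate (Finset.range (n + 1)) (fun i : ℕ => (i : ℝ))
      (fun i => (volume (cthickening (i : ℝ) K)).toReal)).coeff (n - k) / kappa (n - k)

/-- Second derivative (Hessian) of `f : ℝⁿ → ℝ` at `x` as a bilinear expression. -/
def hess2 {n : ℕ} (f : Eucl n → ℝ) (x u v : Eucl n) : ℝ :=
  fderiv ℝ (fderiv ℝ f) x u v

/-- The Hessian matrix of `f` at `x` in the standard coordinates.  For the positively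
`1`-homogeneous extension `f` of a `C²` function `φ` on `𝕊^{n-1}`, at a point `x ∈ 𝕊^{n-1}`
this matrix represents `Q[φ] = (φ_{ij} + φ δ_{ij})` on the tangent space `x^⊥`,
together with an extra zero eigenvalue in the radial direction `x`. -/
def hessMat {n : ℕ} (f : Eucl n → ℝ) (x : Eucl n) : Fin n → Fin n → ℝ :=
  fun i j => hess2 f x (EuclideanSpace.single i (1 : ℝ)) (EuclideanSpace.single j (1 : ℝ))

/-- `S_r(M)`: the `r`-th elementary symmetric function of the eigenvalues of a matrix `M`,
read off from the coefficients of the characteristic polynomial. -/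
def esymmFn (n : ℕ) (r : ℕ) (M : Fin n → Fin n → ℝ) : ℝ :=
  (-1 : ℝ) ^ r * (Matrix.charpoly (Matrix.of M)).coeff (n - r)

/-- The contraction `S_r^{ij}(A) B_{ij}` of the `r`-cofactor matrix of `A` with `B`,
i.e. the first derivative of `S_r` at `A` in direction `B`. -/
def Sder (n r : ℕ) (A B : Fin n → Fin n → ℝ) : ℝ :=
  fderiv ℝ (esymmFn n r) A B

/-- The contraction `S_r^{ij,kl}(A) B_{ij} C_{kl}`, i.e. the second derivative of `S_r`
at `A` in the directions `B, C`. -/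
def Sder2 (n r : ℕ) (A B C : Fin n → Fin n → ℝ) : ℝ :=
  fderiv ℝ (fun M => fderiv ℝ (esymmFn n r) M B) A C

/-- Integral over the unit sphere `𝕊^{n-1}` with respect to the surface measure, expressed
via polar coordinates: `∫_{𝕊^{n-1}} g dσ = n ∫_{B_n} g(x/‖x‖) dx`. -/
def sphInt (n : ℕ) (g : Eucl n → ℝ) : ℝ :=
  n * ∫ x in ball (0 : Eucl n) 1, g (‖x‖⁻¹ • x)

/-- Positively `1`-homogeneous functions on `ℝⁿ`. -/
def IsHomog1 {n : ℕ} (f : Eucl n → ℝ) : Prop :=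
  ∀ c : ℝ, 0 < c → ∀ x : Eucl n, f (c • x) = c * f x

/-- Positively `0`-homogeneous functions on `ℝⁿ`. -/
def IsHomog0 {n : ℕ} (f : Eucl n → ℝ) : Prop :=
  ∀ c : ℝ, 0 < c → ∀ x : Eucl n, f (c • x) = f x

/-- `C²` functions on the sphere, encoded as their positively `1`-homogeneous extensions. -/
def SphC2 (n : ℕ) : Set (Eucl n → ℝ) :=
  {f | IsHomog1 f ∧ ContDiffOn ℝ 2 f {(0 : Eucl n)}ᶜ}

/-- `C²` functions on the sphere, encoded as their positively `0`-homogeneous extensions. -/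
def SphC2z (n : ℕ) : Set (Eucl n → ℝ) :=
  {f | IsHomog0 f ∧ ContDiffOn ℝ 2 f {(0 : Eucl n)}ᶜ}

/-- `C^{2,+}(𝕊^{n-1})`: support functions of convex bodies of class `C^{2,+}`, i.e.
`1`-homogeneous functions, `C²` away from the origin, with `Q[h] > 0` (equivalently, the
Hessian of the homogeneous extension is positive definite on every tangent space `x^⊥`). -/
def C2Plus (n : ℕ) : Set (Eucl n → ℝ) :=
  {h | IsHomog1 h ∧ ContDiffOn ℝ 2 h {(0 : Eucl n)}ᶜ ∧
    ∀ x : Eucl n, ‖x‖ = 1 → ∀ v : Eucl n, v ≠ 0 → ⟪x, v⟫ = 0 → 0 < hess2 h x v v}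

/-- A convex body of class `C^{2,+}`. -/
def IsC2PlusBody {n : ℕ} (K : Set (Eucl n)) : Prop :=
  IsConvexBody K ∧ suppFn K ∈ C2Plus n

/-- The `C²(𝕊^{n-1})` norm of (the homogeneous extension of) a function on the sphere. -/
def sphC2Norm {n : ℕ} (f : Eucl n → ℝ) : ℝ :=
  sSup ((fun x => |f x| + ‖fderiv ℝ f x‖ + ‖fderiv ℝ (fderiv ℝ f) x‖) ''
    sphere (0 : Eucl n) 1)

/-- The spherical Laplacian (for a `0`-homogeneous extension, at points of the sphere, the
Euclidean Laplacian coincides with the Laplace–Beltrami operator on `𝕊^{n-1}`). -/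
def sphLap {n : ℕ} (f : Eucl n → ℝ) (x : Eucl n) : ℝ :=
  ∑ i : Fin n, hess2 f x (EuclideanSpace.single i (1 : ℝ)) (EuclideanSpace.single i (1 : ℝ))

/-- The path `h_s = h e^{sψ}` (with `ψ` `0`-homogeneous, so that `h_s` is `1`-homogeneous). -/
def pathFn {n : ℕ} (h ψ : Eucl n → ℝ) (s : ℝ) : Eucl n → ℝ :=
  fun x => h x * Real.exp (s * ψ x)

/-- `f_k(s) = (1/k) ∫_{𝕊^{n-1}} h_s S_{k-1}(Q[h_s]) dx` along the path `h_s = h e^{sψ}`. -/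
def fkFun {n : ℕ} (k : ℕ) (h ψ : Eucl n → ℝ) (s : ℝ) : ℝ :=
  (1 / (k : ℝ)) *
    sphInt n (fun x => pathFn h ψ s x * esymmFn n (k - 1) (hessMat (pathFn h ψ s) x))

/-!
On the unit sphere the `C²` bound keeps `h = h_K` and its first and second derivatives along a
tangent vector `v` within `1/10` (times `‖v‖`, `‖v‖²`) of those of `‖·‖`, namely `1`, `0` and
`‖v‖²`. Hence `(1 - p) (∂ᵥh)² < h ∂ᵥ²h`, which says that `h ^ p` has positive second derivative
along tangent lines. So does `‖·‖ ^ p`, hence so does `h_t ^ p = (1 - t) ‖·‖ ^ p + t h ^ p`, and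
so does `h_t` itself since `1/p ≥ 1`: this is `Q[h_t] > 0`.

The Hessian of the `1`-homogeneous extension of `h_t` vanishes radially, so it is positive
semidefinite off the origin and `h_t` is convex on segments avoiding the origin; on a line through
the origin the even function `h_t` is `|·|`-homogeneous. So `h_t` is convex, and therefore the
support function of its Wulff shape.
-/

open Set

def HasSecondDerivAt (u : ℝ → ℝ) (d₁ d₂ s₀ : ℝ) : Prop :=
  ∃ u' : ℝ → ℝ, u' s₀ = d₁ ∧ (∀ᶠ s in 𝓝 s₀, HasDerivAt u (u' s) s) ∧ HasDerivAt u' d₂ s₀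

namespace HasSecondDerivAt

variable {u w : ℝ → ℝ} {a₁ a₂ b₁ b₂ s₀ : ℝ}

theorem unique (hu : HasSecondDerivAt u a₁ a₂ s₀) (hw : HasSecondDerivAt u b₁ b₂ s₀) :
    a₁ = b₁ ∧ a₂ = b₂ := by
  obtain ⟨u', rfl, hu, hu'⟩ := hu
  obtain ⟨w', rfl, hw, hw'⟩ := hw
  have heq : u' =ᶠ[𝓝 s₀] w' := by
    filter_upwards [hu, hw] with s h₁ h₂ using h₁.unique h₂
  exact ⟨heq.eq_of_nhds, hu'.unique (hw'.congr_of_eventuallyEq heq)⟩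

theorem add (hu : HasSecondDerivAt u a₁ a₂ s₀) (hw : HasSecondDerivAt w b₁ b₂ s₀) :
    HasSecondDerivAt (fun s => u s + w s) (a₁ + b₁) (a₂ + b₂) s₀ := by
  obtain ⟨u', rfl, hu, hu'⟩ := hu
  obtain ⟨w', rfl, hw, hw'⟩ := hw
  exact ⟨fun s => u' s + w' s, rfl,
    by filter_upwards [hu, hw] with s h₁ h₂ using h₁.add h₂, hu'.add hw'⟩

theorem sub (hu : HasSecondDerivAt u a₁ a₂ s₀) (hw : HasSecondDerivAt w b₁ b₂ s₀) :
    HasSecondDerivAt (fun s => u s - w s) (a₁ - b₁) (a₂ - b₂) s₀ := by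
  obtain ⟨u', rfl, hu, hu'⟩ := hu
  obtain ⟨w', rfl, hw, hw'⟩ := hw
  exact ⟨fun s => u' s - w' s, rfl,
    by filter_upwards [hu, hw] with s h₁ h₂ using h₁.sub h₂, hu'.sub hw'⟩

theorem const_mul (c : ℝ) (hu : HasSecondDerivAt u a₁ a₂ s₀) :
    HasSecondDerivAt (fun s => c * u s) (c * a₁) (c * a₂) s₀ := by
  obtain ⟨u', rfl, hu, hu'⟩ := hu
  exact ⟨fun s => c * u' s, rfl,
    by filter_upwards [hu] with s h using h.const_mul c, hu'.const_mul c⟩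

theorem rpow_const (hu : HasSecondDerivAt u a₁ a₂ s₀) (hpos : 0 < u s₀) (r : ℝ) :
    HasSecondDerivAt (fun s => u s ^ r) (r * u s₀ ^ (r - 1) * a₁)
      (r * (r - 1) * u s₀ ^ (r - 2) * a₁ ^ 2 + r * u s₀ ^ (r - 1) * a₂) s₀ := by
  obtain ⟨u', rfl, hu, hu'⟩ := hu
  have hpos' : ∀ᶠ s in 𝓝 s₀, 0 < u s :=
    continuousAt_const.eventually_lt hu.self_of_nhds.continuousAt hpos
  refine ⟨fun s => r * u s ^ (r - 1) * u' s, rfl, ?_, ?_⟩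
  · filter_upwards [hu, hpos'] with s h hs
    convert h.rpow_const (p := r) (Or.inl hs.ne') using 1
    ring
  · refine (((hu.self_of_nhds.rpow_const (p := r - 1) (Or.inl hpos.ne')).const_mul r).mul
      hu').congr_deriv ?_
    rw [show r - 1 - 1 = r - 2 by ring]
    ring

end HasSecondDerivAt

theorem hasSecondDerivAt_one_add_sq_mul (c : ℝ) :
    HasSecondDerivAt (fun s => 1 + s ^ 2 * c) 0 (2 * c) 0 := by
  refine ⟨fun s => 2 * s * c, by simp, Eventually.of_forall fun s => ?_, ?_⟩
  · simpa using ((hasDerivAt_pow 2 s).mul_const c).const_add 1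
  · simpa using ((hasDerivAt_id (0 : ℝ)).const_mul 2).mul_const c

theorem rpow_second_deriv_pos {p b b₁ b₂ : ℝ} (hp : 0 < p) (hb : 0 < b)
    (h : (1 - p) * b₁ ^ 2 < b * b₂) :
    0 < p * (p - 1) * b ^ (p - 2) * b₁ ^ 2 + p * b ^ (p - 1) * b₂ := by
  have hpow : b ^ (p - 1) = b ^ (p - 2) * b := by
    rw [← Real.rpow_add_one hb.ne']
    ring_nf
  have := mul_pos (mul_pos hp (Real.rpow_pos_of_pos hb (p - 2))) (sub_pos.2 h)
  rw [hpow]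
  linarith

theorem one_sub_mul_add_mul_pos {t a b : ℝ} (ht0 : 0 ≤ t) (ht1 : t ≤ 1) (ha : 0 < a)
    (hb : 0 < b) : 0 < (1 - t) * a + t * b :=
  convex_Ioi (0 : ℝ) ha hb (sub_nonneg.2 ht1) ht0 (sub_add_cancel 1 t)

variable {n : ℕ}

section Line

variable {F : Eucl n → ℝ} {x v : Eucl n} {s₀ : ℝ}

theorem hasDerivAt_add_smul (x v : Eucl n) (s : ℝ) :
    HasDerivAt (fun s : ℝ => x + s • v) v s := by
  simpa using ((hasDerivAt_id s).smul_const v).const_add x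

theorem ContDiffOn.contDiffAt_of_ne_zero (hF : ContDiffOn ℝ 2 F {0}ᶜ) {y : Eucl n}
    (hy : y ≠ 0) : ContDiffAt ℝ 2 F y :=
  hF.contDiffAt (compl_singleton_mem_nhds hy)

theorem ContDiffAt.hasFDerivAt_fderiv (hF : ContDiffAt ℝ 2 F x) :
    HasFDerivAt (fderiv ℝ F) (fderiv ℝ (fderiv ℝ F) x) x :=
  ((hF.fderiv_right (m := 1) (by norm_num)).differentiableAt (by simp)).hasFDerivAt

theorem DifferentiableAt.hasDerivAt_line (hF : DifferentiableAt ℝ F (x + s₀ • v)) :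
    HasDerivAt (fun s : ℝ => F (x + s • v)) (fderiv ℝ F (x + s₀ • v) v) s₀ :=
  hF.hasFDerivAt.comp_hasDerivAt s₀ (hasDerivAt_add_smul x v s₀)

theorem ContDiffAt.hasDerivAt_fderiv_line (hF : ContDiffAt ℝ 2 F (x + s₀ • v)) :
    HasDerivAt (fun s : ℝ => fderiv ℝ F (x + s • v) v) (hess2 F (x + s₀ • v) v v) s₀ :=
  have hF' := (ContinuousLinearMap.apply ℝ ℝ v).hasFDerivAt.comp _ hF.hasFDerivAt_fderiv
  hF'.comp_hasDerivAt (f := fun s : ℝ => x + s • v) s₀ (hasDerivAt_add_smul x v s₀)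

theorem ContDiffAt.hasSecondDerivAt_line (hF : ContDiffAt ℝ 2 F x) (v : Eucl n) :
    HasSecondDerivAt (fun s : ℝ => F (x + s • v)) (fderiv ℝ F x v) (hess2 F x v v) 0 := by
  have hnear : ∀ᶠ s in 𝓝 (0 : ℝ), ContDiffAt ℝ 2 F (x + s • v) :=
    (hasDerivAt_add_smul x v 0).continuousAt.eventually (by simpa using hF.eventually (by simp))
  refine ⟨fun s => fderiv ℝ F (x + s • v) v, by simp, ?_, ?_⟩
  · filter_upwards [hnear] with s hs using (hs.differentiableAt (by simp)).hasDerivAt_line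
  · have hF₀ : ContDiffAt ℝ 2 F (x + (0 : ℝ) • v) := by simpa using hF
    simpa using hF₀.hasDerivAt_fderiv_line

theorem hasSecondDerivAt_norm_line (hx : ‖x‖ = 1) (hv : ⟪x, v⟫ = 0) :
    HasSecondDerivAt (fun s : ℝ => ‖x + s • v‖) 0 (‖v‖ ^ 2) 0 := by
  have heq : (fun s : ℝ => ‖x + s • v‖) = fun s => (1 + s ^ 2 * ‖v‖ ^ 2) ^ (1 / 2 : ℝ) := by
    funext s
    rw [← Real.sqrt_eq_rpow, ← Real.sqrt_sq (norm_nonneg _), norm_add_sq_real, hx,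
      real_inner_smul_right, hv, norm_smul, mul_pow, Real.norm_eq_abs, sq_abs]
    ring_nf
  rw [heq]
  convert (hasSecondDerivAt_one_add_sq_mul (‖v‖ ^ 2)).rpow_const (by norm_num) (1 / 2) using 1
  · simp
  · norm_num
    ring

end Line

namespace IsHomog1

variable {F : Eucl n → ℝ}

theorem map_zero (hF : IsHomog1 F) : F 0 = 0 := by
  have := hF 2 two_pos 0
  rw [smul_zero] at this
  linarith

theorem nonneg (hF : IsHomog1 F) (hpos : ∀ x ≠ 0, 0 < F x) (x : Eucl n) : 0 ≤ F x := by
  rcases eq_or_ne x 0 with rfl | hx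
  · exact hF.map_zero.ge
  · exact (hpos x hx).le

theorem apply_eq_norm_mul (hF : IsHomog1 F) (x : Eucl n) :
    F x = ‖x‖ * F (‖x‖⁻¹ • x) := by
  rcases eq_or_ne x 0 with rfl | hx
  · simp [hF.map_zero]
  · have hx' : 0 < ‖x‖ := norm_pos_iff.2 hx
    rw [← hF _ hx', smul_smul, mul_inv_cancel₀ hx'.ne', one_smul]

theorem apply_smul_of_even (hF : IsHomog1 F) (heven : ∀ x, F (-x) = F x) (c : ℝ)
    (x : Eucl n) : F (c • x) = |c| * F x := by
  rcases lt_trichotomy c 0 with hc | rfl | hc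
  · rw [← heven, ← neg_smul, hF _ (neg_pos.2 hc), abs_of_neg hc]
  · simp [hF.map_zero]
  · rw [hF _ hc, abs_of_pos hc]

theorem fderiv_self (hF : IsHomog1 F) {y : Eucl n} (hd : DifferentiableAt ℝ F y) :
    fderiv ℝ F y y = F y := by
  have hline : HasDerivAt (fun s : ℝ => F (s • y)) (fderiv ℝ F y y) 1 :=
    hd.hasFDerivAt.comp_hasDerivAt_of_eq 1
      (by simpa using (hasDerivAt_id (1 : ℝ)).smul_const y) (by simp)
  have heq : (fun s : ℝ => s * F y) =ᶠ[𝓝 1] fun s => F (s • y) := by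
    filter_upwards [lt_mem_nhds one_pos] with s hs using (hF s hs y).symm
  exact (hline.congr_of_eventuallyEq heq).unique
    (by simpa using (hasDerivAt_id 1).mul_const (F y))

variable (hF : IsHomog1 F) (hF2 : ContDiffOn ℝ 2 F {0}ᶜ)
include hF hF2

theorem fderiv_smul {c : ℝ} (hc : 0 < c) {y : Eucl n} (hy : y ≠ 0) :
    fderiv ℝ F (c • y) = fderiv ℝ F y := by
  have hcomp : HasFDerivAt (fun z => F (c • z))
      ((fderiv ℝ F (c • y)).comp (c • ContinuousLinearMap.id ℝ (Eucl n))) y :=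
    ((hF2.contDiffAt_of_ne_zero (smul_ne_zero hc.ne' hy)).differentiableAt
      (by simp)).hasFDerivAt.comp y (c • ContinuousLinearMap.id ℝ (Eucl n)).hasFDerivAt
  have hmul : HasFDerivAt (fun z => F (c • z)) (c • fderiv ℝ F y) y :=
    (((hF2.contDiffAt_of_ne_zero hy).differentiableAt (by simp)).hasFDerivAt.const_mul
      c).congr_of_eventuallyEq (.of_forall fun z => hF c hc z)
  ext v
  have := congr($(hcomp.unique hmul) v)
  simp only [ContinuousLinearMap.comp_apply, smul_apply, ContinuousLinearMap.id_apply, map_smul,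
    smul_eq_mul] at this
  exact mul_left_cancel₀ hc.ne' this

theorem hess2_self_left {y : Eucl n} (hy : y ≠ 0) (v : Eucl n) : hess2 F y y v = 0 := by
  have hline : HasDerivAt (fun s : ℝ => fderiv ℝ F (s • y)) (fderiv ℝ (fderiv ℝ F) y y) 1 :=
    (hF2.contDiffAt_of_ne_zero hy).hasFDerivAt_fderiv.comp_hasDerivAt_of_eq 1
      (by simpa using (hasDerivAt_id (1 : ℝ)).smul_const y) (by simp)
  have heq : (fun _ : ℝ => fderiv ℝ F y) =ᶠ[𝓝 1] fun s => fderiv ℝ F (s • y) := by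
    filter_upwards [lt_mem_nhds one_pos] with s hs using (hF.fderiv_smul hF2 hs hy).symm
  have := (hline.congr_of_eventuallyEq heq).unique (hasDerivAt_const _ _)
  simp [hess2, this]

theorem hess2_smul {c : ℝ} (hc : 0 < c) {y : Eucl n} (hy : y ≠ 0) (u v : Eucl n) :
    hess2 F (c • y) u v = c⁻¹ * hess2 F y u v := by
  have hcomp : HasFDerivAt (fun z => fderiv ℝ F (c • z))
      ((fderiv ℝ (fderiv ℝ F) (c • y)).comp (c • ContinuousLinearMap.id ℝ (Eucl n))) y :=
    (hF2.contDiffAt_of_ne_zero (smul_ne_zero hc.ne' hy)).hasFDerivAt_fderiv.comp y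
      (c • ContinuousLinearMap.id ℝ (Eucl n)).hasFDerivAt
  have heq : (fun z => fderiv ℝ F (c • z)) =ᶠ[𝓝 y] fderiv ℝ F := by
    filter_upwards [compl_singleton_mem_nhds hy] with z hz using hF.fderiv_smul hF2 hc hz
  have := congr($(hcomp.unique
    ((hF2.contDiffAt_of_ne_zero hy).hasFDerivAt_fderiv.congr_of_eventuallyEq heq)) u v)
  simp only [ContinuousLinearMap.comp_apply, smul_apply, ContinuousLinearMap.id_apply, map_smul,
    smul_eq_mul] at this
  rw [hess2, hess2, ← this, inv_mul_cancel_left₀ hc.ne']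

-- Split `u` into its radial and tangential parts at `y / ‖y‖`; the radial part lies in the
-- kernel of the (symmetric) Hessian.
theorem hess2_nonneg_of_sphere
    (hsph : ∀ x : Eucl n, ‖x‖ = 1 → ∀ v, ⟪x, v⟫ = 0 → 0 ≤ hess2 F x v v)
    {y : Eucl n} (hy : y ≠ 0) (u : Eucl n) : 0 ≤ hess2 F y u u := by
  have hy' : 0 < ‖y‖ := norm_pos_iff.2 hy
  set x := ‖y‖⁻¹ • y
  have hx : ‖x‖ = 1 := norm_smul_inv_norm hy
  have hx0 : x ≠ 0 := by rintro h; simp [h] at hx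
  have hyx : y = ‖y‖ • x := by simp [x, smul_smul, hy'.ne']
  set v := u - ⟪x, u⟫ • x
  have hv : ⟪x, v⟫ = 0 := by simp [v, inner_sub_right, real_inner_smul_right, hx]
  set H := fderiv ℝ (fderiv ℝ F) x
  have hrad : ∀ w, H x w = 0 := hF.hess2_self_left hF2 hx0
  have hrad' : ∀ w, H w x = 0 := fun w =>
    ((hF2.contDiffAt_of_ne_zero hx0).isSymmSndFDerivAt (by simp) w x).trans (hrad w)
  have huv : hess2 F x u u = hess2 F x v v := by
    rw [hess2, show u = ⟪x, u⟫ • x + v by simp [v]]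
    simp [hrad, hrad', H, hess2]
  rw [hyx, hF.hess2_smul hF2 hy' hx0, huv]
  exact mul_nonneg (inv_nonneg.2 hy'.le) (hsph x hx v hv)

end IsHomog1

section Convexity

variable {F : Eucl n → ℝ}

theorem convexOn_segment_of_hess2_nonneg (hF2 : ContDiffOn ℝ 2 F {0}ᶜ)
    (hpsd : ∀ y : Eucl n, y ≠ 0 → ∀ u, 0 ≤ hess2 F y u u) {x d : Eucl n}
    (hseg : ∀ s ∈ Icc (0 : ℝ) 1, x + s • d ≠ 0) :
    ConvexOn ℝ (Icc 0 1) fun s : ℝ => F (x + s • d) := by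
  have hC : ∀ s ∈ Icc (0 : ℝ) 1, ContDiffAt ℝ 2 F (x + s • d) := fun s hs =>
    hF2.contDiffAt_of_ne_zero (hseg s hs)
  refine convexOn_of_hasDerivWithinAt2_nonneg (convex_Icc 0 1)
    (f' := fun s => fderiv ℝ F (x + s • d) d) (f'' := fun s => hess2 F (x + s • d) d d)
    (fun s hs => ((hC s hs).continuousAt.comp (f := fun s : ℝ => x + s • d)
      (hasDerivAt_add_smul x d s).continuousAt).continuousWithinAt) ?_ ?_ ?_ <;>
    rw [interior_Icc] <;> intro s hs
  · exact ((hC s (Ioo_subset_Icc_self hs)).differentiableAt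
      (by simp)).hasDerivAt_line.hasDerivWithinAt
  · exact (hC s (Ioo_subset_Icc_self hs)).hasDerivAt_fderiv_line.hasDerivWithinAt
  · exact hpsd _ (hseg s (Ioo_subset_Icc_self hs)) d

theorem IsHomog1.convexOn_univ (hF : IsHomog1 F) (hF2 : ContDiffOn ℝ 2 F {0}ᶜ)
    (heven : ∀ x, F (-x) = F x) (hnn : ∀ x, 0 ≤ F x)
    (hpsd : ∀ y : Eucl n, y ≠ 0 → ∀ u, 0 ≤ hess2 F y u u) : ConvexOn ℝ univ F := by
  refine ⟨convex_univ, fun x _ y _ a b ha hb hab => ?_⟩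
  simp only [smul_eq_mul]
  by_cases hseg : ∀ s ∈ Icc (0 : ℝ) 1, x + s • (y - x) ≠ 0
  · have h := (convexOn_segment_of_hess2_nonneg hF2 hpsd hseg).2 (left_mem_Icc.2 zero_le_one)
      (right_mem_Icc.2 zero_le_one) ha hb hab
    have hxy : x + b • (y - x) = a • x + b • y := by
      obtain rfl : a = 1 - b := by linarith
      module
    simpa [hxy] using h
  push Not at hseg
  obtain ⟨s, hs, h0⟩ := hseg
  have habs := hF.apply_smul_of_even heven
  rcases hs.1.eq_or_lt with rfl | hs0
  · obtain rfl : x = 0 := by simpa using h0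
    simp [habs, abs_of_nonneg hb, hF.map_zero]
  have hy : y = (1 - s⁻¹) • x := by
    have hsy : s • y = (s - 1) • x := by rw [← sub_eq_zero, ← h0]; module
    calc y = s⁻¹ • (s • y) := by rw [smul_smul, inv_mul_cancel₀ hs0.ne', one_smul]
      _ = (1 - s⁻¹) • x := by rw [hsy, smul_smul, mul_sub, inv_mul_cancel₀ hs0.ne', mul_one]
  rw [hy, smul_smul, ← add_smul, habs, habs]
  calc |a + b * (1 - s⁻¹)| * F x ≤ (|a| + |b * (1 - s⁻¹)|) * F x :=
        mul_le_mul_of_nonneg_right (abs_add_le _ _) (hnn x)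
    _ = a * F x + b * (|1 - s⁻¹| * F x) := by
        rw [abs_mul, abs_of_nonneg ha, abs_of_nonneg hb]
        ring

theorem IsHomog1.fderiv_apply_le (hF : IsHomog1 F) (hconv : ConvexOn ℝ univ F) {x : Eucl n}
    (hd : DifferentiableAt ℝ F x) (y : Eucl n) : fderiv ℝ F x y ≤ F y := by
  have hline : HasDerivAt (F ∘ AffineMap.lineMap (k := ℝ) x y) (fderiv ℝ F x (y - x)) 0 := by
    have hφ : F ∘ AffineMap.lineMap (k := ℝ) x y = fun s => F (x + s • (y - x)) := by
      ext s
      simp [AffineMap.lineMap_apply_module', add_comm]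
    have hd' : DifferentiableAt ℝ F (x + (0 : ℝ) • (y - x)) := by simpa using hd
    simpa [hφ] using hd'.hasDerivAt_line
  have h := (hconv.comp_affineMap (AffineMap.lineMap x y)).le_slope_of_hasDerivAt
    (mem_univ 0) (mem_univ 1) zero_lt_one hline
  simp only [slope_def_field, Function.comp_apply, AffineMap.lineMap_apply_zero,
    AffineMap.lineMap_apply_one, sub_zero, div_one, map_sub, hF.fderiv_self hd] at h
  linarith

end Convexity

section Wulff

variable {F : Eucl n → ℝ}

theorem suppFn_zero (K : Set (Eucl n)) : suppFn K 0 = 0 := by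
  rcases K.eq_empty_or_nonempty with rfl | hK
  · simp [suppFn]
  · simp [suppFn, hK.image_const]

theorem suppFn_neg {K : Set (Eucl n)} (hK : ∀ x ∈ K, -x ∈ K) (x : Eucl n) :
    suppFn K (-x) = suppFn K x := by
  unfold suppFn
  congr 1
  ext r
  constructor <;> rintro ⟨y, hy, rfl⟩ <;> exact ⟨-y, hK y hy, by simp⟩

theorem mem_wulff_iff (hF : IsHomog1 F) {z : Eucl n} :
    z ∈ wulff F ↔ ∀ y, ⟪z, y⟫ ≤ F y := by
  refine ⟨fun hz y => ?_, fun hz y _ => hz y⟩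
  rcases eq_or_ne y 0 with rfl | hy
  · simp [hF.map_zero]
  have hy' : 0 < ‖y‖ := norm_pos_iff.2 hy
  have h := hz (‖y‖⁻¹ • y) (norm_smul_inv_norm hy)
  rw [real_inner_smul_right] at h
  rw [hF.apply_eq_norm_mul y, ← mul_inv_cancel_left₀ hy'.ne' ⟪z, y⟫]
  exact mul_le_mul_of_nonneg_left h hy'.le

theorem neg_mem_wulff (heven : ∀ x, F (-x) = F x) {z : Eucl n} (hz : z ∈ wulff F) :
    -z ∈ wulff F := fun y hy => by
  simpa [heven] using hz (-y) (by simpa using hy)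

theorem isConvexBody_wulff (hcont : ContinuousOn F (sphere 0 1)) (hnn : ∀ x, 0 ≤ F x) :
    IsConvexBody (wulff F) := by
  have hconv : Convex ℝ (wulff F) := fun z₁ h₁ z₂ h₂ a b ha hb hab y hy => by
    rw [inner_add_left, real_inner_smul_left, real_inner_smul_left, ← one_mul (F y), ← hab,
      add_mul]
    exact add_le_add (mul_le_mul_of_nonneg_left (h₁ y hy) ha)
      (mul_le_mul_of_nonneg_left (h₂ y hy) hb)
  have hclosed : IsClosed (wulff F) := by
    simp only [wulff, ofPred_forall]
    exact isClosed_iInter fun y => isClosed_iInter fun _ =>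
      isClosed_le (by fun_prop) continuous_const
  obtain ⟨R, hR⟩ := (isCompact_sphere (0 : Eucl n) 1).bddAbove_image hcont
  have hball : wulff F ⊆ closedBall 0 (max R 0) := fun z hz => by
    rw [mem_closedBall_zero_iff]
    rcases eq_or_ne z 0 with rfl | hz0
    · simp
    have hu : ‖‖z‖⁻¹ • z‖ = 1 := norm_smul_inv_norm hz0
    have h := hz _ hu
    rw [real_inner_smul_right, real_inner_self_eq_norm_sq, pow_two,
      inv_mul_cancel_left₀ (norm_ne_zero_iff.2 hz0)] at h
    exact le_max_of_le_left (h.trans (hR ⟨_, by simpa using hu, rfl⟩))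
  exact ⟨hconv, (isBounded_closedBall.subset hball).isCompact_closure.of_isClosed_subset hclosed
    subset_closure, 0, fun y _ => by simpa using hnn y⟩

theorem suppFn_wulff (hF : IsHomog1 F) (hconv : ConvexOn ℝ univ F)
    (hd : ∀ x ≠ 0, DifferentiableAt ℝ F x) : suppFn (wulff F) = F := by
  funext x
  rcases eq_or_ne x 0 with rfl | hx
  · rw [suppFn_zero, hF.map_zero]
  -- the gradient of `F` at `x` is the point of `wulff F` where `⟪x, ·⟫` is maximal
  set z := (InnerProductSpace.toDual ℝ (Eucl n)).symm (fderiv ℝ F x)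
  have hz : ∀ y, ⟪z, y⟫ = fderiv ℝ F x y := fun y => InnerProductSpace.toDual_symm_apply
  refine IsGreatest.csSup_eq ⟨⟨z, (mem_wulff_iff hF).2 fun y => ?_, ?_⟩, ?_⟩
  · exact (hz y).trans_le (hF.fderiv_apply_le hconv (hd x hx) y)
  · change ⟪x, z⟫ = F x
    rw [real_inner_comm, hz, hF.fderiv_self (hd x hx)]
  · rintro _ ⟨w, hw, rfl⟩
    change ⟪x, w⟫ ≤ F x
    rw [real_inner_comm]
    exact (mem_wulff_iff hF).1 hw x

theorem isC2PlusBody_wulff (hF : F ∈ C2Plus n) (heven : ∀ x, F (-x) = F x)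
    (hnn : ∀ x, 0 ≤ F x) : IsC2PlusBody (wulff F) ∧ suppFn (wulff F) = F := by
  obtain ⟨hF1, hF2, hQ⟩ := hF
  have hpsd : ∀ y : Eucl n, y ≠ 0 → ∀ u, 0 ≤ hess2 F y u u := fun y hy =>
    hF1.hess2_nonneg_of_sphere hF2 (fun x hx v hv => by
      rcases eq_or_ne v 0 with rfl | hv0
      · simp [hess2]
      · exact (hQ x hx v hv0 hv).le) hy
  have hsupp := suppFn_wulff hF1 (hF1.convexOn_univ hF2 heven hnn hpsd) fun x hx =>
    (hF2.contDiffAt_of_ne_zero hx).differentiableAt (by simp)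
  refine ⟨⟨isConvexBody_wulff ?_ hnn, by rw [hsupp]; exact ⟨hF1, hF2, hQ⟩⟩, hsupp⟩
  exact hF2.continuousOn.mono fun z hz => ne_zero_of_mem_unit_sphere ⟨z, hz⟩

end Wulff

-- `h_t` for `K₀ = B_n`, whose support function is `‖·‖`
def pCombFn (p t : ℝ) (h : Eucl n → ℝ) (x : Eucl n) : ℝ :=
  ((1 - t) * ‖x‖ ^ p + t * h x ^ p) ^ (1 / p)

section PComb

variable {p t : ℝ} {h : Eucl n → ℝ}

theorem pCombFn_neg (heven : ∀ x, h (-x) = h x) (x : Eucl n) :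
    pCombFn p t h (-x) = pCombFn p t h x := by
  simp [pCombFn, heven]

variable (ht0 : 0 ≤ t) (ht1 : t ≤ 1)
include ht0 ht1

theorem pCombFn_nonneg (hnn : ∀ x, 0 ≤ h x) (x : Eucl n) : 0 ≤ pCombFn p t h x :=
  Real.rpow_nonneg (add_nonneg (mul_nonneg (sub_nonneg.2 ht1) (by positivity))
    (mul_nonneg ht0 (Real.rpow_nonneg (hnn x) p))) _

theorem isHomog1_pCombFn (hp : 0 < p) (hh : IsHomog1 h) (hnn : ∀ x, 0 ≤ h x) :
    IsHomog1 (pCombFn p t h) := by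
  intro c hc x
  have hW : 0 ≤ (1 - t) * ‖x‖ ^ p + t * h x ^ p :=
    add_nonneg (mul_nonneg (sub_nonneg.2 ht1) (by positivity))
      (mul_nonneg ht0 (Real.rpow_nonneg (hnn x) p))
  simp only [pCombFn]
  rw [norm_smul, Real.norm_eq_abs, abs_of_pos hc, hh c hc x, Real.mul_rpow hc.le (norm_nonneg x),
    Real.mul_rpow hc.le (hnn x),
    show (1 - t) * (c ^ p * ‖x‖ ^ p) + t * (c ^ p * h x ^ p)
      = c ^ p * ((1 - t) * ‖x‖ ^ p + t * h x ^ p) by ring,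
    Real.mul_rpow (by positivity) hW, ← Real.rpow_mul hc.le, mul_one_div_cancel hp.ne',
    Real.rpow_one]

variable (hh2 : ContDiffOn ℝ 2 h {0}ᶜ) (hpos : ∀ x ≠ 0, 0 < h x)
include hh2 hpos

theorem contDiffOn_pCombFn : ContDiffOn ℝ 2 (pCombFn p t h) {0}ᶜ := fun x hx => by
  have hx : x ≠ 0 := hx
  have hW := one_sub_mul_add_mul_pos ht0 ht1 (Real.rpow_pos_of_pos (norm_pos_iff.2 hx) p)
    (Real.rpow_pos_of_pos (hpos x hx) p)
  have hN := (contDiffAt_norm ℝ (n := 2) hx).rpow_const_of_ne (p := p) (norm_ne_zero_iff.2 hx)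
  have hH := (hh2.contDiffAt_of_ne_zero hx).rpow_const_of_ne (p := p) (hpos x hx).ne'
  exact ((contDiffAt_const.mul hN).add (contDiffAt_const.mul hH)).rpow_const_of_ne
    hW.ne' |>.contDiffWithinAt

-- Along the tangent line through `x` in direction `v`, the Hessian of `h_t` is the second
-- derivative of `s ↦ ((1 - t) ‖x + s • v‖ ^ p + t h (x + s • v) ^ p) ^ (1 / p)` at `0`;
-- `hcond` says that the second derivative of `h ^ p` there is positive.
theorem hess2_pCombFn_pos (hp0 : 0 < p) (hp1 : p < 1) {x v : Eucl n} (hx : ‖x‖ = 1)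
    (hv : ⟪x, v⟫ = 0) (hv0 : v ≠ 0)
    (hcond : (1 - p) * fderiv ℝ h x v ^ 2 < h x * hess2 h x v v) :
    0 < hess2 (pCombFn p t h) x v v := by
  have hx0 : x ≠ 0 := by rintro rfl; simp at hx
  have hb := hpos x hx0
  have hW := one_sub_mul_add_mul_pos ht0 ht1 one_pos (Real.rpow_pos_of_pos hb p)
  have hN := (hasSecondDerivAt_norm_line hx hv).rpow_const (by simp [hx]) p
  have hH := ((hh2.contDiffAt_of_ne_zero hx0).hasSecondDerivAt_line v).rpow_const
    (by simpa using hb) p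
  have hline := ((hN.const_mul (1 - t)).add (hH.const_mul t)).rpow_const
    (by simpa [hx] using hW) (1 / p)
  rw [(((contDiffOn_pCombFn ht0 ht1 hh2 hpos).contDiffAt_of_ne_zero hx0).hasSecondDerivAt_line
    v).unique hline |>.2]
  simp only [zero_smul, add_zero, hx, Real.one_rpow, mul_one, mul_zero, zero_pow two_ne_zero,
    zero_add, one_div]
  have hW' : 0 < 1 - t + t * h x ^ p := by simpa using hW
  have hp' : 0 ≤ p⁻¹ - 1 := sub_nonneg.2 ((one_le_inv₀ hp0).2 hp1.le)
  have hdir := one_sub_mul_add_mul_pos ht0 ht1 (by positivity : 0 < p * ‖v‖ ^ 2)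
    (rpow_second_deriv_pos hp0 hb hcond)
  exact add_pos_of_nonneg_of_pos
    (mul_nonneg (mul_nonneg (mul_nonneg (inv_nonneg.2 hp0.le) hp') (Real.rpow_nonneg hW'.le _))
      (sq_nonneg _))
    (mul_pos (mul_pos (inv_pos.2 hp0) (Real.rpow_pos_of_pos hW' _)) hdir)

theorem pCombFn_mem_C2Plus (hp0 : 0 < p) (hp1 : p < 1) (hh1 : IsHomog1 h)
    (hcond : ∀ x : Eucl n, ‖x‖ = 1 → ∀ v, v ≠ 0 → ⟪x, v⟫ = 0 →
      (1 - p) * fderiv ℝ h x v ^ 2 < h x * hess2 h x v v) :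
    pCombFn p t h ∈ C2Plus n :=
  ⟨isHomog1_pCombFn ht0 ht1 hp0 hh1 (hh1.nonneg hpos), contDiffOn_pCombFn ht0 ht1 hh2 hpos,
    fun x hx v hv0 hv => hess2_pCombFn_pos ht0 ht1 hh2 hpos hp0 hp1 hx hv hv0 (hcond x hx v hv0 hv)⟩

end PComb

theorem le_sphC2Norm {f : Eucl n → ℝ} (hf : ContDiffOn ℝ 2 f {0}ᶜ) {x : Eucl n}
    (hx : ‖x‖ = 1) : |f x| + ‖fderiv ℝ f x‖ + ‖fderiv ℝ (fderiv ℝ f) x‖ ≤ sphC2Norm f := by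
  have hcont : ContinuousOn (fun z => |f z| + ‖fderiv ℝ f z‖ + ‖fderiv ℝ (fderiv ℝ f) z‖)
      (sphere 0 1) := fun z hz => by
    have hC := hf.contDiffAt_of_ne_zero (ne_zero_of_mem_unit_sphere ⟨z, hz⟩)
    have hC' := hC.fderiv_right (m := 1) (by norm_num)
    exact ((hC.continuousAt.abs.add hC'.continuousAt.norm).add
      (hC'.fderiv_right (m := 0) (by norm_num)).continuousAt.norm).continuousWithinAt
  exact le_csSup ((isCompact_sphere 0 1).bddAbove_image hcont) ⟨x, by simpa using hx, rfl⟩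

section NearBall

variable {h : Eucl n → ℝ} {η : ℝ} (hh : ContDiffOn ℝ 2 h {0}ᶜ)
  (hη : sphC2Norm (fun x => ‖x‖ - h x) ≤ η)
include hh hη

theorem bounds_on_sphere_of_sphC2Norm_sub_le {x : Eucl n} (hx : ‖x‖ = 1) :
    1 - η ≤ h x ∧ ∀ v, ⟪x, v⟫ = 0 →
      |fderiv ℝ h x v| ≤ η * ‖v‖ ∧ (1 - η) * ‖v‖ ^ 2 ≤ hess2 h x v v := by
  set f := fun x => ‖x‖ - h x
  have hx0 : x ≠ 0 := by rintro rfl; simp at hx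
  have hf : ContDiffOn ℝ 2 f {0}ᶜ := fun z hz =>
    ((contDiffAt_norm ℝ hz).sub (hh.contDiffAt_of_ne_zero hz)).contDiffWithinAt
  have hbound := (le_sphC2Norm hf hx).trans hη
  have h₀ := abs_nonneg (f x)
  have h₁ := norm_nonneg (fderiv ℝ f x)
  have h₂ := norm_nonneg (fderiv ℝ (fderiv ℝ f) x)
  have hf₀ : |1 - h x| ≤ η := by simpa [f, hx] using (by linarith : |f x| ≤ η)
  refine ⟨by linarith [(abs_le.1 hf₀).2], fun v hv => ?_⟩
  obtain ⟨hd, hdd⟩ := ((hf.contDiffAt_of_ne_zero hx0).hasSecondDerivAt_line v).unique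
    ((hasSecondDerivAt_norm_line hx hv).sub
      ((hh.contDiffAt_of_ne_zero hx0).hasSecondDerivAt_line v))
  have hf₁ : |fderiv ℝ f x v| ≤ η * ‖v‖ := ((fderiv ℝ f x).le_opNorm v).trans
    (mul_le_mul_of_nonneg_right (by linarith) (norm_nonneg v))
  have hf₂ : |hess2 f x v v| ≤ η * ‖v‖ ^ 2 := by
    refine ((fderiv ℝ (fderiv ℝ f) x).le_opNorm₂ v v).trans ?_
    rw [mul_assoc, ← pow_two]
    exact mul_le_mul_of_nonneg_right (by linarith) (by positivity)
  refine ⟨by rwa [show fderiv ℝ h x v = -fderiv ℝ f x v by linarith, abs_neg], ?_⟩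
  linarith [(abs_le.1 hf₂).2]

theorem pos_of_sphC2Norm_sub_le (hh1 : IsHomog1 h) (hη1 : η < 1) {x : Eucl n} (hx : x ≠ 0) :
    0 < h x := by
  have hu : ‖‖x‖⁻¹ • x‖ = 1 := norm_smul_inv_norm hx
  have := (bounds_on_sphere_of_sphC2Norm_sub_le hh hη hu).1
  rw [hh1.apply_eq_norm_mul]
  exact mul_pos (norm_pos_iff.2 hx) (by linarith)

theorem sq_fderiv_lt_of_sphC2Norm_sub_le (hη2 : η < 1 / 2) {p : ℝ} (hp : 0 ≤ p) {x v : Eucl n}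
    (hx : ‖x‖ = 1) (hv0 : v ≠ 0) (hv : ⟪x, v⟫ = 0) :
    (1 - p) * fderiv ℝ h x v ^ 2 < h x * hess2 h x v v := by
  obtain ⟨hb, hbv⟩ := bounds_on_sphere_of_sphC2Norm_sub_le hh hη hx
  obtain ⟨hD, hH⟩ := hbv v hv
  have hv' : 0 < ‖v‖ := norm_pos_iff.2 hv0
  have hη0 : 0 ≤ η := nonneg_of_mul_nonneg_left ((abs_nonneg _).trans hD) hv'
  have hD2 : fderiv ℝ h x v ^ 2 ≤ (η * ‖v‖) ^ 2 := by
    rw [← sq_abs]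
    exact pow_le_pow_left₀ (abs_nonneg _) hD 2
  calc (1 - p) * fderiv ℝ h x v ^ 2 ≤ 1 * (η * ‖v‖) ^ 2 :=
        mul_le_mul (by linarith) hD2 (sq_nonneg _) zero_le_one
    _ < (1 - η) * ((1 - η) * ‖v‖ ^ 2) := by
        nlinarith [mul_pos (by linarith : (0 : ℝ) < 1 - 2 * η) (pow_pos hv' 2)]
    _ ≤ h x * hess2 h x v v := mul_le_mul hb hH (by nlinarith) (by linarith)

end NearBall

theorem statement15_general (n : ℕ) (p : ℝ) (hp : p ∈ Set.Ioo (0 : ℝ) 1) :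
    ∃ η : ℝ, 0 < η ∧
      ∀ K : Set (Eucl n), IsC2PlusBody K → (0 : Eucl n) ∈ interior K →
        (∀ x ∈ K, -x ∈ K) →
        sphC2Norm (fun x => ‖x‖ - suppFn K x) ≤ η →
        ∀ t ∈ Set.Icc (0 : ℝ) 1,
          ∃ L : Set (Eucl n), IsC2PlusBody L ∧ (∀ x ∈ L, -x ∈ L) ∧
            ∀ x : Eucl n,
              suppFn L x = ((1 - t) * ‖x‖ ^ p + t * suppFn K x ^ p) ^ (1 / p) := by
  obtain ⟨hp0, hp1⟩ := hp
  refine ⟨1 / 10, by norm_num, fun K ⟨_, hh1, hh2, _⟩ _ hKsym hKnorm t ⟨ht0, ht1⟩ => ?_⟩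
  have hpos : ∀ x ≠ 0, 0 < suppFn K x := fun x =>
    pos_of_sphC2Norm_sub_le hh2 hKnorm hh1 (by norm_num)
  have heven := pCombFn_neg (p := p) (t := t) (suppFn_neg hKsym)
  have hG := pCombFn_mem_C2Plus ht0 ht1 hh2 hpos hp0 hp1 hh1 fun x hx v hv0 hv =>
    sq_fderiv_lt_of_sphC2Norm_sub_le hh2 hKnorm (by norm_num) hp0.le hx hv0 hv
  obtain ⟨hL, hsupp⟩ := isC2PlusBody_wulff hG heven (pCombFn_nonneg ht0 ht1 (hh1.nonneg hpos))
  exact ⟨_, hL, fun z => neg_mem_wulff heven, fun x => by rw [hsupp]; rfl⟩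

/-- Lemma `non si voleva`: for `p ∈ (0,1)` and `K` origin-symmetric of
class `C^{2,+}` close to the unit ball, `h_t = ((1-t) + t h_K^p)^{1/p}` is the support
function of an origin-symmetric convex body of class `C^{2,+}`, for every `t ∈ [0,1]`.
(The function below is the `1`-homogeneous extension of `h_t`.) -/
theorem statement15 (n : ℕ) (hn : 2 ≤ n) (p : ℝ) (hp : p ∈ Set.Ioo (0 : ℝ) 1) :
    ∃ η : ℝ, 0 < η ∧
      ∀ K : Set (Eucl n), IsC2PlusBody K → (0 : Eucl n) ∈ interior K →
        (∀ x ∈ K, -x ∈ K) →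
        sphC2Norm (fun x => ‖x‖ - suppFn K x) ≤ η →
        ∀ t ∈ Set.Icc (0 : ℝ) 1,
          ∃ L : Set (Eucl n), IsC2PlusBody L ∧ (∀ x ∈ L, -x ∈ L) ∧
            ∀ x : Eucl n,
              suppFn L x = ((1 - t) * ‖x‖ ^ p + t * suppFn K x ^ p) ^ (1 / p) :=
  statement15_general n p hp
end
end

section
/- Let n ≥ 3, k ∈ {2,…,n−1} with k ≤ n/2, and let K₀ = {x ∈ ℝⁿ : x_j = 0 for j = 1,…,n−k, |x_i| ≤ 1 for i = n−k+1,…,n} and K₁ = {x ∈ ℝⁿ : |x_i| ≤ 1 for i = 1,…,k, x_j = 0 for j = k+1,…,n} be two coordinate k-cubes of side 2. Then for every p ∈ (0,1), the body K_p := (1/2)·K₀ +_p (1/2)·K₁ satisfies V_k(K_p) ≤ binom(2k, k) · 2^{k − k/p}, while V_k(K₀) = V_k(K₁) = 2ᵏ. Consequently, for every p < k / log₂ binom(2k, k), one has V_k(K_p)^{p/k} < (1/2)V_k(K₀)^{p/k} + (1/2)V_k(K₁)^{p/k}, i.e. the p-Brunn-Minkowski inequality for V_k fails. -/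
open Metric MeasureTheory Filter
open scoped RealInnerProductSpace Pointwise Topology

noncomputable section

/-- The `k`-dimensional coordinate cube `K₀` of side length 2 spanned by the last `k`
coordinates of `ℝⁿ`. -/
def cubeK₀ (n k : ℕ) : Set (Eucl n) :=
  {x | (∀ j : Fin n, (j : ℕ) < n - k → x j = 0) ∧
       (∀ i : Fin n, n - k ≤ (i : ℕ) → |x i| ≤ 1)}

/-- The `k`-dimensional coordinate cube `K₁` of side length 2 spanned by the first `k`
coordinates of `ℝⁿ`. -/
def cubeK₁ (n k : ℕ) : Set (Eucl n) :=
  {x | (∀ i : Fin n, (i : ℕ) < k → |x i| ≤ 1) ∧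
       (∀ j : Fin n, k ≤ (j : ℕ) → x j = 0)}

open Finset Polynomial
open scoped ENNReal NNReal

/-! All bodies involved are coordinate boxes `∏ [-aᵢ, aᵢ]`. The `ε`-neighbourhood of such a box is
`{x | ∑ excess(aᵢ, xᵢ)² ≤ ε²}`, where `excess b t` is the distance from `t` to `[-b, b]`.
Integrating out one coordinate at a time, the slab `|xᵢ| ≤ aᵢ` contributes a factor `2aᵢ`, while
the two outer half-lines slide together into one more dimension of a Euclidean ball. Hence the
volume of the neighbourhood is obtained from `∏ᵢ (X + 2aᵢ)` by replacing `Xʲ` with the volume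
`κⱼ εʲ` of the `j`-dimensional `ε`-ball, and `V_k` of the box is the coefficient of `X^{n-k}`.
For a cube of half-width `α` on `s` coordinates this is `binom(s, k) (2α)ᵏ`.

The cubes `K₀` and `K₁` live on disjoint sets of coordinates, and `K_p` is the cube of half-width
`2^{-1/p}` on their union. Indeed, the support function `2^{-1/p} ∑ |yᵢ|` of that cube is below the
`p`-mean of `h_{K₀}` and `h_{K₁}` because `s ↦ s^{1/p}` is superadditive, and the two agree at the
vectors `±eᵢ`. So `V_k(K_p) = binom(2k, k) 2^{k - k/p}`, and the failure of the inequality comes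
down to `binom(2k, k)^{p/k} < 2`. -/

def excess (b t : ℝ) : ℝ := max (|t| - b) 0

lemma excess_nonneg (b t : ℝ) : 0 ≤ excess b t := le_max_right _ _

@[fun_prop]
lemma continuous_excess (b : ℝ) : Continuous (excess b) := by unfold excess; fun_prop

lemma excess_abs (b t : ℝ) : excess b |t| = excess b t := by simp [excess]

lemma excess_zero_left (t : ℝ) : excess 0 t = |t| := by simp [excess]

lemma excess_eq_zero {b t : ℝ} (h : |t| ≤ b) : excess b t = 0 := max_eq_right (by linarith)

lemma excess_eq_sub {b t : ℝ} (h : b ≤ |t|) : excess b t = |t| - b := max_eq_left (by linarith)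

lemma excess_le_abs_sub {b s t : ℝ} (hs : |s| ≤ b) : excess b t ≤ |t - s| :=
  max_le (by linarith [abs_sub_abs_le_abs_sub t s]) (abs_nonneg _)

lemma abs_sub_clamp {b : ℝ} (hb : 0 ≤ b) (t : ℝ) : |t - max (-b) (min b t)| = excess b t := by
  unfold excess
  rcases le_total t (-b) with h | h
  · rw [min_eq_right (by linarith), max_eq_left h, abs_of_nonpos (by linarith),
      abs_of_nonpos (by linarith), max_eq_left (by linarith)]
    ring
  rcases le_total t b with h' | h'
  · rw [min_eq_right h', max_eq_right h, sub_self, abs_zero, eq_comm, max_eq_right]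
    linarith [abs_le.2 ⟨h, h'⟩]
  · rw [min_eq_left h', max_eq_right (by linarith), abs_of_nonneg (by linarith),
      abs_of_nonneg (by linarith), max_eq_left (by linarith)]

def coordBox {n : ℕ} (a : Fin n → ℝ) : Set (Eucl n) := {x | ∀ i, |x i| ≤ a i}

lemma infDist_coordBox {n : ℕ} {a : Fin n → ℝ} (ha : ∀ i, 0 ≤ a i) (x : Eucl n) :
    infDist x (coordBox a) = √(∑ i, excess (a i) (x i) ^ 2) := by
  have hne : (coordBox a).Nonempty := ⟨0, fun i => by simpa using ha i⟩
  have hdist : ∀ y : Eucl n, dist x y = √(∑ i, |x i - y i| ^ 2) := fun y => by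
    simp [EuclideanSpace.dist_eq, Real.dist_eq]
  refine le_antisymm ?_ ((le_infDist hne).2 fun y hy => ?_)
  · set y : Eucl n := WithLp.toLp 2 fun i => max (-a i) (min (a i) (x i))
    have hy : y ∈ coordBox a := fun i =>
      abs_le.2 ⟨le_max_left _ _, max_le (by linarith [ha i]) (min_le_left _ _)⟩
    refine (infDist_le_dist_of_mem hy).trans_eq ?_
    simp [hdist, y, abs_sub_clamp (ha _)]
  · rw [hdist]
    gcongr with i
    · exact excess_nonneg _ _
    · exact excess_le_abs_sub (hy i)

lemma cthickening_coordBox {n : ℕ} {a : Fin n → ℝ} (ha : ∀ i, 0 ≤ a i) {ε : ℝ} (hε : 0 ≤ ε) :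
    cthickening ε (coordBox a) = {x | ∑ i, excess (a i) (x i) ^ 2 ≤ ε ^ 2} := by
  have hne : (coordBox a).Nonempty := ⟨0, fun i => by simpa using ha i⟩
  ext x
  rw [mem_cthickening_iff, ENNReal.le_ofReal_iff_toReal_le (infEDist_ne_top hne) hε,
    ← infDist, infDist_coordBox ha, Real.sqrt_le_left hε]
  rfl

def excessVolume {m : ℕ} (a : Fin m → ℝ) (c : ℝ) : ℝ≥0∞ :=
  volume {x : Fin m → ℝ | ∑ i, excess (a i) (x i) ^ 2 ≤ c}

lemma excessVolume_succ {m : ℕ} (a : Fin (m + 1) → ℝ) (c : ℝ) :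
    excessVolume a c = ∫⁻ t, excessVolume (Fin.tail a) (c - excess (a 0) t ^ 2) := by
  set S : Set (ℝ × (Fin m → ℝ)) :=
    {q | ∑ j, excess (Fin.tail a j) (q.2 j) ^ 2 ≤ c - excess (a 0) q.1 ^ 2}
  have hS : MeasurableSet S := (isClosed_le (by fun_prop) (by fun_prop)).measurableSet
  have hpre : MeasurableEquiv.piFinSuccAbove (fun _ => ℝ) 0 ⁻¹' S =
      {x | ∑ i, excess (a i) (x i) ^ 2 ≤ c} := by
    ext x
    simp [S, Fin.sum_univ_succ, Fin.tail, le_sub_iff_add_le']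
  rw [excessVolume, ← hpre,
    (volume_preserving_piFinSuccAbove (fun _ : Fin (m + 1) => ℝ) 0).measure_preimage
      hS.nullMeasurableSet, Measure.volume_eq_prod, Measure.prod_apply hS]
  rfl

lemma lintegral_comp_abs (g : ℝ → ℝ≥0∞) : ∫⁻ x, g |x| = 2 * ∫⁻ x in Set.Ioi 0, g x := by
  have hneg : ∫⁻ x in Set.Iio 0, g |x| = ∫⁻ x in Set.Ioi 0, g x := by
    rw [setLIntegral_congr_fun measurableSet_Iio fun x hx => by rw [abs_of_neg hx],
      (Measure.measurePreserving_neg volume).setLIntegral_comp_emb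
        (Homeomorph.neg ℝ).measurableEmbedding]
    simp
  have hpos : ∫⁻ x in Set.Ici 0, g |x| = ∫⁻ x in Set.Ioi 0, g x := by
    rw [← setLIntegral_congr Ioi_ae_eq_Ici]
    exact setLIntegral_congr_fun measurableSet_Ioi fun x hx => by rw [abs_of_pos hx]
  rw [← lintegral_add_compl _ measurableSet_Iio, Set.compl_Iio, hneg, hpos, two_mul]

lemma setLIntegral_Ioi_comp_excess {b : ℝ} (hb : 0 ≤ b) (f : ℝ → ℝ≥0∞) :
    ∫⁻ t in Set.Ioi 0, f (excess b t) = ENNReal.ofReal b * f 0 + ∫⁻ u in Set.Ioi 0, f u := by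
  have hin : ∫⁻ t in Set.Ioc 0 b, f (excess b t) = ENNReal.ofReal b * f 0 := by
    rw [setLIntegral_congr_fun measurableSet_Ioc fun t ht =>
      by rw [excess_eq_zero (abs_le.2 ⟨by linarith [ht.1], ht.2⟩)]]
    simp [mul_comm]
  have hout : ∫⁻ t in Set.Ioi b, f (excess b t) = ∫⁻ u in Set.Ioi 0, f u := by
    rw [setLIntegral_congr_fun measurableSet_Ioi fun t ht => by
        rw [excess_eq_sub (le_abs.2 (Or.inl (le_of_lt ht))), abs_of_pos (hb.trans_lt ht)],
      (measurePreserving_sub_right volume b).setLIntegral_comp_emb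
        (Homeomorph.subRight b).measurableEmbedding]
    simp
  rw [← hin, ← hout, ← lintegral_union measurableSet_Ioi Set.Ioc_disjoint_Ioi_same,
    Set.Ioc_union_Ioi_eq_Ioi hb]

lemma lintegral_comp_excess {b : ℝ} (hb : 0 ≤ b) (f : ℝ → ℝ≥0∞) :
    ∫⁻ t, f (excess b t) = ENNReal.ofReal (2 * b) * f 0 + ∫⁻ u, f |u| := by
  have h := lintegral_comp_abs (f ∘ excess b)
  simp only [Function.comp_apply, excess_abs] at h
  rw [h, setLIntegral_Ioi_comp_excess hb, lintegral_comp_abs, mul_add, ← mul_assoc,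
    ENNReal.ofReal_mul zero_le_two, ENNReal.ofReal_ofNat]

def ballVolume (d : ℕ) (c : ℝ) : ℝ≥0∞ := volume {x : Fin d → ℝ | ∑ i, x i ^ 2 ≤ c}

lemma excessVolume_zero (d : ℕ) (c : ℝ) : excessVolume (0 : Fin d → ℝ) c = ballVolume d c := by
  simp [excessVolume, ballVolume, excess_zero_left]

lemma ballVolume_succ (d : ℕ) (c : ℝ) :
    ballVolume (d + 1) c = ∫⁻ u, ballVolume d (c - u ^ 2) := by
  rw [← excessVolume_zero, excessVolume_succ]
  simp only [Pi.zero_apply, excess_zero_left, sq_abs,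
    show Fin.tail (0 : Fin (d + 1) → ℝ) = 0 from rfl, excessVolume_zero]

lemma volume_preimage_ofLp {d : ℕ} (s : Set (Fin d → ℝ)) :
    volume {x : Eucl d | x.ofLp ∈ s} = volume s :=
  (EuclideanSpace.volume_preserving_symm_measurableEquiv_toLp (Fin d)).measure_preimage_equiv s

lemma ballVolume_sq (d : ℕ) {ε : ℝ} (hε : 0 ≤ ε) :
    ballVolume d (ε ^ 2) = ENNReal.ofReal (kappa d * ε ^ d) := by
  have hball : {x : Eucl d | x.ofLp ∈ {y : Fin d → ℝ | ∑ i, y i ^ 2 ≤ ε ^ 2}} =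
      closedBall 0 ε := by
    ext x
    simp [EuclideanSpace.norm_eq, Real.sqrt_le_left hε]
  rw [ballVolume, ← volume_preimage_ofLp, hball, Measure.addHaar_closedBall _ _ hε, kappa,
    ENNReal.ofReal_mul (by positivity), ENNReal.ofReal_toReal measure_ball_lt_top.ne, mul_comm]
  simp

lemma monotone_ballVolume (d : ℕ) : Monotone (ballVolume d) :=
  fun _ _ hcd => measure_mono fun _ hx => le_trans hx hcd

-- Coefficients in `ℝ≥0` make this evaluation `Xʲ ↦ ballVolume j c` additive in `P`.
def ballSum (P : ℝ≥0[X]) (c : ℝ) : ℝ≥0∞ := P.sum fun j r => r * ballVolume j c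

lemma ballSum_add (P Q : ℝ≥0[X]) (c : ℝ) : ballSum (P + Q) c = ballSum P c + ballSum Q c :=
  sum_add_index _ _ _ (fun _ => by simp) fun _ _ _ => by push_cast; rw [add_mul]

lemma ballSum_monomial (j : ℕ) (r : ℝ≥0) (c : ℝ) :
    ballSum (monomial j r) c = r * ballVolume j c :=
  sum_monomial_index _ _ (by simp)

lemma monotone_ballSum (P : ℝ≥0[X]) : Monotone (ballSum P) :=
  fun _ _ hcd => sum_le_sum fun j _ => by dsimp only; gcongr; exact monotone_ballVolume j hcd

lemma ballSum_C_mul (r : ℝ≥0) (P : ℝ≥0[X]) (c : ℝ) : ballSum (C r * P) c = r * ballSum P c := by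
  induction P using Polynomial.induction_on' with
  | add P Q hP hQ => rw [mul_add, ballSum_add, ballSum_add, hP, hQ, mul_add]
  | monomial j s =>
    rw [C_mul_monomial, ballSum_monomial, ballSum_monomial, ENNReal.coe_mul, mul_assoc]

lemma ballSum_X_mul (P : ℝ≥0[X]) (c : ℝ) : ballSum (X * P) c = ∫⁻ u, ballSum P (c - u ^ 2) := by
  induction P using Polynomial.induction_on' with
  | add P Q hP hQ =>
    simp only [mul_add, ballSum_add, hP, hQ]
    exact (lintegral_add_left ((monotone_ballSum P).measurable.comp (by fun_prop)) _).symm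
  | monomial j s =>
    rw [X_mul_monomial, ballSum_monomial, ballVolume_succ,
      ← lintegral_const_mul' _ _ ENNReal.coe_ne_top]
    simp only [ballSum_monomial]

def coordBoxPoly {m : ℕ} (a : Fin m → ℝ) : ℝ≥0[X] := ∏ i, (X + C (2 * a i).toNNReal)

lemma coordBoxPoly_succ {m : ℕ} (a : Fin (m + 1) → ℝ) :
    coordBoxPoly a = (X + C (2 * a 0).toNNReal) * coordBoxPoly (Fin.tail a) :=
  Fin.prod_univ_succ _

lemma excessVolume_eq_ballSum {m : ℕ} {a : Fin m → ℝ} (ha : ∀ i, 0 ≤ a i) (c : ℝ) :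
    excessVolume a c = ballSum (coordBoxPoly a) c := by
  induction m generalizing c with
  | zero =>
    rw [Subsingleton.elim a 0, excessVolume_zero, coordBoxPoly, Fin.prod_univ_zero, ← C_1, ballSum,
      sum_C_index (by simp)]
    simp
  | succ m ih =>
    set Q := coordBoxPoly (Fin.tail a)
    calc excessVolume a c = ∫⁻ t, ballSum Q (c - excess (a 0) t ^ 2) := by
          simp only [excessVolume_succ, ih (a := Fin.tail a) fun i => ha i.succ, Q]
      _ = ENNReal.ofReal (2 * a 0) * ballSum Q c + ∫⁻ u, ballSum Q (c - u ^ 2) := by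
          rw [lintegral_comp_excess (ha 0) fun v => ballSum Q (c - v ^ 2)]
          simp only [sq_abs, zero_pow two_ne_zero, sub_zero]
      _ = ballSum (coordBoxPoly a) c := by
          rw [coordBoxPoly_succ, add_mul, ballSum_add, ballSum_C_mul, ballSum_X_mul, add_comm]
          rfl

lemma natDegree_coordBoxPoly {m : ℕ} (a : Fin m → ℝ) : (coordBoxPoly a).natDegree = m := by
  rw [coordBoxPoly, natDegree_prod_of_monic _ _ fun i _ => monic_X_add_C _]
  simp

lemma kappa_pos (j : ℕ) : 0 < kappa j :=
  ENNReal.toReal_pos (measure_ball_pos volume 0 one_pos).ne' measure_ball_lt_top.ne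

lemma volume_cthickening_coordBox {n : ℕ} {a : Fin n → ℝ} (ha : ∀ i, 0 ≤ a i) {ε : ℝ} (hε : 0 ≤ ε) :
    (volume (cthickening ε (coordBox a))).toReal =
      ∑ j ∈ range (n + 1), (coordBoxPoly a).coeff j * kappa j * ε ^ j := by
  rw [cthickening_coordBox ha hε]
  change (volume {x : Eucl n | x.ofLp ∈ {y | ∑ i, excess (a i) (y i) ^ 2 ≤ ε ^ 2}}).toReal = _
  rw [volume_preimage_ofLp, ← excessVolume, excessVolume_eq_ballSum ha, ballSum,
    sum_over_range' _ (fun _ => by simp) (n + 1) (by rw [natDegree_coordBoxPoly]; omega),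
    ENNReal.toReal_sum fun j _ => ENNReal.mul_ne_top ENNReal.coe_ne_top
      (by rw [ballVolume_sq j hε]; exact ENNReal.ofReal_ne_top)]
  refine Finset.sum_congr rfl fun j _ => ?_
  rw [ballVolume_sq j hε, ENNReal.toReal_mul, ENNReal.coe_toReal,
    ENNReal.toReal_ofReal (by have := kappa_pos j; positivity), mul_assoc]

lemma intrinsicVolume_eq_of_volume_cthickening {n k : ℕ} {K : Set (Eucl n)}
    (c : ℕ → ℝ) (hK : ∀ i : ℕ, (volume (cthickening (i : ℝ) K)).toReal =
      ∑ j ∈ range (n + 1), c j * (i : ℝ) ^ j) :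
    intrinsicVolume k K = c (n - k) / kappa (n - k) := by
  set P : ℝ[X] := ∑ j : Fin (n + 1), C (c j) * X ^ (j : ℕ)
  have hP : Lagrange.interpolate (range (n + 1)) (fun i : ℕ => (i : ℝ))
      (fun i => (volume (cthickening (i : ℝ) K)).toReal) = P := by
    refine (Lagrange.eq_interpolate_of_eval_eq _ (fun i _ j _ h => Nat.cast_injective h)
      ((degree_sum_fin_lt _).trans_eq (by simp)) fun i _ => ?_).symm
    simp [hK, eval_finsetSum, Fin.sum_univ_eq_sum_range (fun j => c j * (i : ℝ) ^ j)]
  rw [intrinsicVolume, hP]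
  congr 1
  simp only [P, finsetSum_coeff, coeff_C_mul_X_pow]
  rw [Fin.sum_univ_eq_sum_range (fun j => if n - k = j then c j else 0), Finset.sum_ite_eq,
    if_pos (mem_range.2 (by omega))]

lemma intrinsicVolume_coordBox {n : ℕ} (k : ℕ) {a : Fin n → ℝ} (ha : ∀ i, 0 ≤ a i) :
    intrinsicVolume k (coordBox a) = (coordBoxPoly a).coeff (n - k) := by
  rw [intrinsicVolume_eq_of_volume_cthickening _
      fun i => volume_cthickening_coordBox ha (Nat.cast_nonneg i),
    mul_div_cancel_right₀ _ (kappa_pos _).ne']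

lemma coordBoxPoly_ite {n : ℕ} (S : Finset (Fin n)) (α : ℝ) :
    coordBoxPoly (fun i => if i ∈ S then α else 0) =
      (X + C (2 * α).toNNReal) ^ #S * X ^ (n - #S) := by
  simp only [coordBoxPoly, mul_zero, apply_ite, Real.toNNReal_zero, C_0, add_zero]
  rw [prod_ite, prod_const, prod_const]
  simp [Finset.filter_not, card_sdiff]

lemma intrinsicVolume_coordBox_ite {n k : ℕ} {S : Finset (Fin n)} (hk : k ≤ #S) {α : ℝ}
    (hα : 0 ≤ α) :
    intrinsicVolume k (coordBox fun i => if i ∈ S then α else 0) = (#S).choose k * (2 * α) ^ k := by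
  have hS : #S ≤ n := by simpa using S.card_le_univ
  rw [intrinsicVolume_coordBox k fun i => by split_ifs <;> simp [hα], coordBoxPoly_ite,
    coeff_mul_X_pow', if_pos (by omega), coeff_X_add_C_pow,
    show n - k - (n - #S) = #S - k by omega, Nat.choose_symm hk, Nat.sub_sub_self hk]
  push_cast
  rw [Real.coe_toNNReal _ (by positivity), mul_comm]

lemma inner_le_sum_mul_abs {n : ℕ} {a : Fin n → ℝ} {x : Eucl n} (hx : x ∈ coordBox a) (y : Eucl n) :
    ⟪x, y⟫ ≤ ∑ i, a i * |y i| := by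
  simp only [PiLp.inner_apply, RCLike.inner_apply, conj_trivial]
  refine Finset.sum_le_sum fun i _ => ?_
  calc y i * x i ≤ |x i| * |y i| := by rw [← abs_mul, mul_comm]; exact le_abs_self _
    _ ≤ a i * |y i| := by gcongr; exact hx i

lemma suppFn_coordBox {n : ℕ} {a : Fin n → ℝ} (ha : ∀ i, 0 ≤ a i) (y : Eucl n) :
    suppFn (coordBox a) y = ∑ i, a i * |y i| := by
  refine IsGreatest.csSup_eq
    ⟨⟨WithLp.toLp 2 fun i => if 0 ≤ y i then a i else -a i, fun i => ?_, ?_⟩, ?_⟩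
  · dsimp only
    split_ifs <;> simp [abs_of_nonneg (ha i)]
  · simp only [PiLp.inner_apply, RCLike.inner_apply, conj_trivial]
    refine Finset.sum_congr rfl fun i _ => ?_
    split_ifs with h
    · rw [abs_of_nonneg h, mul_comm]
    · rw [abs_of_neg (not_le.1 h)]; ring
  · rintro _ ⟨x, hx, rfl⟩
    exact (real_inner_comm x y).trans_le (inner_le_sum_mul_abs hx y)

lemma wulff_eq_coordBox {n : ℕ} {a : Fin n → ℝ} {f : Eucl n → ℝ}
    (hf : ∀ y : Eucl n, ‖y‖ = 1 → ∑ i, a i * |y i| ≤ f y)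
    (hf_single : ∀ i (σ : ℝ), |σ| = 1 → f (EuclideanSpace.single i σ) ≤ a i) :
    wulff f = coordBox a := by
  ext x
  refine ⟨fun hx i => abs_le.2 ⟨?_, ?_⟩, fun hx y hy => ?_⟩
  · have h := hx (EuclideanSpace.single i (-1)) (by simp)
    have h' := hf_single i (-1) (by simp)
    simp [EuclideanSpace.inner_single_right] at h
    linarith
  · have h := hx (EuclideanSpace.single i 1) (by simp)
    have h' := hf_single i 1 (by simp)
    simp [EuclideanSpace.inner_single_right] at h
    linarith
  · exact (inner_le_sum_mul_abs hx y).trans (hf y hy)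

lemma rpow_mul_add_rpow_mul_le {p w₀ w₁ s₀ s₁ : ℝ} (hp : 0 < p) (hp1 : p ≤ 1) (hw₀ : 0 ≤ w₀)
    (hw₁ : 0 ≤ w₁) (hs₀ : 0 ≤ s₀) (hs₁ : 0 ≤ s₁) :
    w₀ ^ (1 / p) * s₀ + w₁ ^ (1 / p) * s₁ ≤ (w₀ * s₀ ^ p + w₁ * s₁ ^ p) ^ (1 / p) := by
  have key : ∀ {w s : ℝ}, 0 ≤ w → 0 ≤ s → (w * s ^ p) ^ (1 / p) = w ^ (1 / p) * s := fun hw hs => by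
    rw [Real.mul_rpow hw (by positivity), ← Real.rpow_mul hs, mul_one_div_cancel hp.ne',
      Real.rpow_one]
  rw [← key hw₀ hs₀, ← key hw₁ hs₁]
  exact Real.add_rpow_le_rpow_add (by positivity) (by positivity) (by rw [le_div_iff₀ hp]; linarith)

lemma sum_mul_abs_single {n : ℕ} (a : Fin n → ℝ) (i : Fin n) (σ : ℝ) :
    ∑ j, a j * |(EuclideanSpace.single i σ : Eucl n) j| = a i * |σ| := by
  simp [apply_ite]

lemma pComb_coordBox_ite {n : ℕ} {S₀ S₁ : Finset (Fin n)} (hS : Disjoint S₀ S₁) {p t : ℝ}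
    (hp : 0 < p) (hp1 : p ≤ 1) (ht₀ : 0 ≤ t) (ht₁ : t ≤ 1) :
    pComb p t (coordBox fun i => if i ∈ S₀ then 1 else 0)
        (coordBox fun i => if i ∈ S₁ then 1 else 0) =
      coordBox fun i =>
        if i ∈ S₀ then (1 - t) ^ (1 / p) else if i ∈ S₁ then t ^ (1 / p) else 0 := by
  have h01 : ∀ (S : Finset (Fin n)) i, (0 : ℝ) ≤ if i ∈ S then 1 else 0 := fun S i => by
    split_ifs <;> norm_num
  unfold pComb
  simp only [suppFn_coordBox (h01 _)]
  apply wulff_eq_coordBox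
  · intro y _
    have hsplit : ∑ i, (if i ∈ S₀ then (1 - t) ^ (1 / p) else if i ∈ S₁ then t ^ (1 / p) else 0) *
        |y i| = (1 - t) ^ (1 / p) * ∑ i, (if i ∈ S₀ then 1 else 0) * |y i| +
          t ^ (1 / p) * ∑ i, (if i ∈ S₁ then 1 else 0) * |y i| := by
      rw [mul_sum, mul_sum, ← sum_add_distrib]
      refine Finset.sum_congr rfl fun i _ => ?_
      by_cases h₀ : i ∈ S₀
      · simp [h₀, Finset.disjoint_left.1 hS h₀]
      · by_cases h₁ : i ∈ S₁ <;> simp [h₀, h₁]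
    rw [hsplit]
    exact rpow_mul_add_rpow_mul_le hp hp1 (by linarith) ht₀
      (sum_nonneg fun i _ => mul_nonneg (h01 _ i) (abs_nonneg _))
      (sum_nonneg fun i _ => mul_nonneg (h01 _ i) (abs_nonneg _))
  · intro i σ hσ
    rw [sum_mul_abs_single, sum_mul_abs_single, hσ, mul_one, mul_one]
    by_cases h₀ : i ∈ S₀
    · simp [h₀, Finset.disjoint_left.1 hS h₀, Real.zero_rpow hp.ne']
    by_cases h₁ : i ∈ S₁
    · simp [h₀, h₁, Real.zero_rpow hp.ne']
    · simp [h₀, h₁, Real.zero_rpow hp.ne', Real.zero_rpow (inv_pos.2 hp).ne']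

lemma cubeK₀_eq_coordBox (n k : ℕ) :
    cubeK₀ n k =
      coordBox fun i => if i ∈ ({i | n - k ≤ (i : ℕ)} : Finset (Fin n)) then 1 else 0 := by
  ext x
  simp only [cubeK₀, coordBox, Set.mem_ofPred_eq, mem_filter, mem_univ, true_and]
  refine ⟨fun ⟨h₀, h₁⟩ i => ?_, fun h => ⟨fun j hj => ?_, fun i hi => by simpa [hi] using h i⟩⟩
  · split_ifs with hi
    · exact h₁ i hi
    · simp [h₀ i (not_le.1 hi)]
  · simpa [not_le.2 hj] using h j

lemma cubeK₁_eq_coordBox (n k : ℕ) :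
    cubeK₁ n k = coordBox fun i => if i ∈ ({i | (i : ℕ) < k} : Finset (Fin n)) then 1 else 0 := by
  ext x
  simp only [cubeK₁, coordBox, Set.mem_ofPred_eq, mem_filter, mem_univ, true_and]
  refine ⟨fun ⟨h₀, h₁⟩ i => ?_, fun h => ⟨fun i hi => by simpa [hi] using h i, fun j hj => ?_⟩⟩
  · split_ifs with hi
    · exact h₀ i hi
    · simp [h₁ i (not_lt.1 hi)]
  · simpa [not_lt.2 hj] using h j

lemma card_filter_sub_le_val {n k : ℕ} (hk : k ≤ n) :
    #({i | n - k ≤ (i : ℕ)} : Finset (Fin n)) = k := by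
  have := card_filter_add_card_filter_not (s := (univ : Finset (Fin n))) fun i => (i : ℕ) < n - k
  simp only [not_lt, Fin.card_filter_val_lt, card_univ, Fintype.card_fin] at this
  omega

lemma intrinsicVolume_cubeK₀ {n k : ℕ} (hk : k ≤ n) : intrinsicVolume k (cubeK₀ n k) = 2 ^ k := by
  rw [cubeK₀_eq_coordBox, intrinsicVolume_coordBox_ite (card_filter_sub_le_val hk).ge zero_le_one,
    card_filter_sub_le_val hk]
  simp

lemma intrinsicVolume_cubeK₁ {n k : ℕ} (hk : k ≤ n) : intrinsicVolume k (cubeK₁ n k) = 2 ^ k := by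
  have hcard : #({i | (i : ℕ) < k} : Finset (Fin n)) = k := by simp [Fin.card_filter_val_lt, hk]
  rw [cubeK₁_eq_coordBox, intrinsicVolume_coordBox_ite hcard.ge zero_le_one, hcard]
  simp

lemma intrinsicVolume_pComb_cubes {n k : ℕ} (hkn : 2 * k ≤ n) {p : ℝ} (hp : 0 < p) (hp1 : p ≤ 1) :
    intrinsicVolume k (pComb p (1 / 2) (cubeK₀ n k) (cubeK₁ n k)) =
      (2 * k).choose k * (2 * (1 / 2) ^ (1 / p)) ^ k := by
  set S₀ : Finset (Fin n) := {i | n - k ≤ (i : ℕ)}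
  set S₁ : Finset (Fin n) := {i | (i : ℕ) < k}
  have hS : Disjoint S₀ S₁ := disjoint_filter.2 fun i _ h₀ h₁ => by omega
  have hcard : #(S₀ ∪ S₁) = 2 * k := by
    rw [card_union_of_disjoint hS, card_filter_sub_le_val (by omega)]
    simp [S₁, Fin.card_filter_val_lt]
    omega
  rw [cubeK₀_eq_coordBox, cubeK₁_eq_coordBox,
    pComb_coordBox_ite hS hp hp1 (by norm_num) (by norm_num)]
  norm_num only [← ite_or, ← mem_union]
  rw [intrinsicVolume_coordBox_ite (by omega) (by positivity), hcard]

lemma two_mul_half_rpow_pow (k : ℕ) (p : ℝ) :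
    (2 * (1 / 2 : ℝ) ^ (1 / p)) ^ k = (2 : ℝ) ^ ((k : ℝ) - k / p) := by
  rw [mul_pow, ← Real.rpow_natCast ((1 / 2 : ℝ) ^ (1 / p)), ← Real.rpow_mul (by norm_num),
    one_div_mul_eq_div, one_div 2, Real.inv_rpow zero_le_two, Real.rpow_sub two_pos,
    Real.rpow_natCast, ← div_eq_mul_inv]

lemma rpow_div_lt_two {C k p : ℝ} (hC : 1 < C) (hk : 0 < k) (h : p < k / Real.logb 2 C) :
    C ^ (p / k) < 2 := by
  have hlog : Real.logb 2 C * (p / k) < 1 := by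
    rwa [lt_div_iff₀ (Real.logb_pos one_lt_two hC), ← div_lt_one hk, mul_comm, mul_div_assoc] at h
  calc C ^ (p / k) = 2 ^ (Real.logb 2 C * (p / k)) := by
        rw [Real.rpow_mul zero_le_two, Real.rpow_logb two_pos (by norm_num) (by linarith)]
    _ < 2 ^ (1 : ℝ) := Real.rpow_lt_rpow_of_exponent_lt one_lt_two hlog
    _ = 2 := Real.rpow_one 2

lemma mul_two_rpow_rpow_lt {C p : ℝ} {k : ℕ} (hC : 1 < C) (hk : 0 < k) (hp : 0 < p)
    (h : p < k / Real.logb 2 C) :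
    (C * (2 : ℝ) ^ ((k : ℝ) - k / p)) ^ (p / k) <
      1 / 2 * ((2 : ℝ) ^ k) ^ (p / k) + 1 / 2 * ((2 : ℝ) ^ k) ^ (p / k) := by
  have hk' : (0 : ℝ) < k := Nat.cast_pos.2 hk
  have hpow : ((2 : ℝ) ^ k) ^ (p / k) = 2 ^ p := by
    rw [← Real.rpow_natCast, ← Real.rpow_mul zero_le_two, mul_div_cancel₀ _ hk'.ne']
  rw [Real.mul_rpow (by linarith) (by positivity), ← Real.rpow_mul zero_le_two, hpow,
    show ((k : ℝ) - k / p) * (p / k) = p - 1 by field_simp, Real.rpow_sub_one two_ne_zero]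
  nlinarith [rpow_div_lt_two hC hk' h, Real.rpow_pos_of_pos two_pos p]

theorem statement17_general (n k : ℕ) (hk2 : 2 ≤ k) (hhalf : 2 * k ≤ n) :
    intrinsicVolume k (cubeK₀ n k) = 2 ^ k ∧
    intrinsicVolume k (cubeK₁ n k) = 2 ^ k ∧
    ∀ p : ℝ, 0 < p → p < 1 →
      intrinsicVolume k (pComb p (1 / 2) (cubeK₀ n k) (cubeK₁ n k)) ≤
        ((2 * k).choose k : ℝ) * (2 : ℝ) ^ ((k : ℝ) - k / p) ∧
      (p < k / Real.logb 2 ((2 * k).choose k) →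
        intrinsicVolume k (pComb p (1 / 2) (cubeK₀ n k) (cubeK₁ n k)) ^ (p / k) <
          (1 / 2) * intrinsicVolume k (cubeK₀ n k) ^ (p / k) +
            (1 / 2) * intrinsicVolume k (cubeK₁ n k) ^ (p / k)) := by
  have hK₀ := intrinsicVolume_cubeK₀ (show k ≤ n by omega)
  have hK₁ := intrinsicVolume_cubeK₁ (show k ≤ n by omega)
  refine ⟨hK₀, hK₁, fun p hp hp1 => ?_⟩
  have hKp : intrinsicVolume k (pComb p (1 / 2) (cubeK₀ n k) (cubeK₁ n k)) =
      ((2 * k).choose k : ℝ) * (2 : ℝ) ^ ((k : ℝ) - k / p) := by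
    rw [intrinsicVolume_pComb_cubes hhalf hp hp1.le, two_mul_half_rpow_pow]
  have hC : (1 : ℝ) < (2 * k).choose k := by
    rw [← Nat.centralBinom_eq_two_mul_choose]
    exact_mod_cast Nat.two_le_centralBinom k (by omega)
  refine ⟨hKp.le, fun h => ?_⟩
  rw [hKp, hK₀, hK₁]
  exact mul_two_rpow_rpow_lt hC (by omega) hp h

/-- the counterexample in the case `k ≤ n/2`: for the two coordinate
`k`-cubes, `V_k(K_p) ≤ binom(2k,k) 2^{k-k/p}` while `V_k(K₀) = V_k(K₁) = 2^k`, so the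
`p`-Brunn–Minkowski inequality for `V_k` fails whenever `p < k / log₂ binom(2k,k)`. -/
theorem statement17 (n k : ℕ) (hn : 3 ≤ n) (hk2 : 2 ≤ k) (hk : k ≤ n - 1)
    (hhalf : 2 * k ≤ n) :
    intrinsicVolume k (cubeK₀ n k) = 2 ^ k ∧
    intrinsicVolume k (cubeK₁ n k) = 2 ^ k ∧
    ∀ p : ℝ, 0 < p → p < 1 →
      intrinsicVolume k (pComb p (1 / 2) (cubeK₀ n k) (cubeK₁ n k)) ≤
        ((2 * k).choose k : ℝ) * (2 : ℝ) ^ ((k : ℝ) - k / p) ∧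
      (p < k / Real.logb 2 ((2 * k).choose k) →
        intrinsicVolume k (pComb p (1 / 2) (cubeK₀ n k) (cubeK₁ n k)) ^ (p / k) <
          (1 / 2) * intrinsicVolume k (cubeK₀ n k) ^ (p / k) +
            (1 / 2) * intrinsicVolume k (cubeK₁ n k) ^ (p / k)) :=
  statement17_general n k hk2 hhalf
end
end
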